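/- arXiv:2107.06381 — 4 statements merged into one kernel-verified Lean document; each statement's English description precedes it below -/
import Mathlib

section
/- Let T > 0, τ ≥ 0, α > 0, λ ≥ 0 and 0 ≤ t ≤ T + τ. Then e^{-2tλ} / (α(1 + τλ) + e^{-Tλ})^2 ≤ (1/α)^{2(1 - t/(T+τ))}. -/
/-!
With `s = t / (T + τ) ∈ [0, 1]`, the denominator dominates `α + e^{-(T+τ)λ}`, which by the
weighted AM–GM inequality dominates `α^{1-s} (e^{-(T+τ)λ})^s = α^{1-s} e^{-tλ}`. Squaring and
dividing, the factor `e^{-2tλ}` cancels and leaves `α^{-2(1-s)}`.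
-/

open Real

lemma rpow_one_sub_mul_rpow_le_add {a b s : ℝ} (ha : 0 ≤ a) (hb : 0 ≤ b) (hs0 : 0 ≤ s)
    (hs1 : s ≤ 1) : a ^ (1 - s) * b ^ s ≤ a + b :=
  calc a ^ (1 - s) * b ^ s ≤ (1 - s) * a + s * b :=
        geom_mean_le_arith_mean2_weighted (by linarith) hs0 ha hb (by ring)
    _ ≤ a + b := by nlinarith

lemma rpow_one_sub_div_mul_exp_le_qbvm_denom {T τ α lam t : ℝ} (hτ : 0 ≤ τ) (hα : 0 < α)
    (hlam : 0 ≤ lam) (ht0 : 0 ≤ t) (ht1 : t ≤ T + τ) :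
    α ^ (1 - t / (T + τ)) * exp (-t * lam) ≤ α * (1 + τ * lam) + exp (-T * lam) := by
  set s := t / (T + τ)
  -- `T + τ = 0` forces `t = 0`, so `s * (T + τ) = t` needs no case split.
  have hs : s * (T + τ) = t := div_mul_cancel_of_imp fun h => by linarith
  have hs0 : 0 ≤ s := div_nonneg ht0 (ht0.trans ht1)
  have hs1 : s ≤ 1 := div_le_one_of_le₀ ht1 (ht0.trans ht1)
  have hτlam : 0 ≤ τ * lam := mul_nonneg hτ hlam
  have hexp : exp (-(T + τ) * lam) ^ s = exp (-t * lam) := by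
    rw [← exp_mul, ← hs]; ring_nf
  calc α ^ (1 - s) * exp (-t * lam) = α ^ (1 - s) * exp (-(T + τ) * lam) ^ s := by rw [hexp]
    _ ≤ α + exp (-(T + τ) * lam) :=
        rpow_one_sub_mul_rpow_le_add hα.le (exp_pos _).le hs0 hs1
    _ ≤ α * (1 + τ * lam) + exp (-T * lam) := by
        gcongr
        · nlinarith
        · nlinarith

theorem stmt_2_general (T τ α lam t : ℝ) (hτ : 0 ≤ τ) (hα : 0 < α)
    (hlam : 0 ≤ lam) (ht0 : 0 ≤ t) (ht1 : t ≤ T + τ) :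
    Real.exp (-2 * t * lam) / (α * (1 + τ * lam) + Real.exp (-T * lam)) ^ 2 ≤
      (1 / α) ^ (2 * (1 - t / (T + τ))) := by
  set c := α ^ (1 - t / (T + τ)) * exp (-t * lam)
  have hsq : exp (-2 * t * lam) = exp (-t * lam) ^ 2 := by rw [← exp_nat_mul]; ring_nf
  calc exp (-2 * t * lam) / (α * (1 + τ * lam) + exp (-T * lam)) ^ 2
      ≤ exp (-2 * t * lam) / c ^ 2 := by
        gcongr; exact rpow_one_sub_div_mul_exp_le_qbvm_denom hτ hα hlam ht0 ht1
    _ = (1 / α) ^ (2 * (1 - t / (T + τ))) := by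
        rw [mul_comm 2, rpow_mul (by positivity), div_rpow zero_le_one hα.le, one_rpow, hsq]
        simp only [c, mul_pow, rpow_two]
        field_simp

theorem stmt_2 (T τ α lam t : ℝ) (hT : 0 < T) (hτ : 0 ≤ τ) (hα : 0 < α)
    (hlam : 0 ≤ lam) (ht0 : 0 ≤ t) (ht1 : t ≤ T + τ) :
    Real.exp (-2 * t * lam) / (α * (1 + τ * lam) + Real.exp (-T * lam)) ^ 2 ≤
      (1 / α) ^ (2 * (1 - t / (T + τ))) :=
  stmt_2_general T τ α lam t hτ hα hlam ht0 ht1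
end

section
/- Let T > 0, τ > 0, α > 0, λ ≥ 0 and 0 ≤ t ≤ T + τ. Then τ² e^{-2tλ} / (α(1 + τλ) + τ e^{-Tλ})² ≤ (τ/α)^{2(1 - t/(T+τ))}. -/
/-!
Put `θ = t / (T + τ)` and `x = exp (-(T + τ) λ)`, so that `exp (-t λ) = x ^ θ`. The denominator
dominates `α + τ x`, and by weighted AM-GM `α + τ x ≥ α ^ (1 - θ) (τ x) ^ θ`; dividing
`τ x ^ θ` by the latter leaves exactly `(τ / α) ^ (1 - θ)`. Squaring gives the bound.
-/

open Real

theorem Real.rpow_mul_rpow_le_add {a b θ : ℝ} (ha : 0 ≤ a) (hb : 0 ≤ b) (hθ0 : 0 ≤ θ)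
    (hθ1 : θ ≤ 1) : a ^ (1 - θ) * b ^ θ ≤ a + b :=
  calc a ^ (1 - θ) * b ^ θ ≤ (1 - θ) * a + θ * b :=
        geom_mean_le_arith_mean2_weighted (by linarith) hθ0 ha hb (by ring)
    _ ≤ a + b := by nlinarith

theorem mul_rpow_div_add_le {a τ x θ : ℝ} (ha : 0 < a) (hτ : 0 < τ) (hx : 0 < x)
    (hθ0 : 0 ≤ θ) (hθ1 : θ ≤ 1) : τ * x ^ θ / (a + τ * x) ≤ (τ / a) ^ (1 - θ) := by
  have hlow : a ^ (1 - θ) * (τ ^ θ * x ^ θ) ≤ a + τ * x := by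
    rw [← mul_rpow hτ.le hx.le]
    exact rpow_mul_rpow_le_add ha.le (by positivity) hθ0 hθ1
  calc τ * x ^ θ / (a + τ * x) ≤ τ * x ^ θ / (a ^ (1 - θ) * (τ ^ θ * x ^ θ)) :=
        div_le_div_of_nonneg_left (by positivity) (by positivity) hlow
    _ = τ ^ (1 - θ) / a ^ (1 - θ) := by
        rw [rpow_sub hτ, rpow_one]
        field_simp
    _ = (τ / a) ^ (1 - θ) := (div_rpow hτ.le ha.le _).symm

theorem mul_exp_div_add_le_rpow {T τ α lam t : ℝ} (hτ : 0 < τ) (hα : 0 < α) (hlam : 0 ≤ lam)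
    (ht0 : 0 ≤ t) (ht1 : t ≤ T + τ) :
    τ * exp (-t * lam) / (α * (1 + τ * lam) + τ * exp (-T * lam)) ≤
      (τ / α) ^ (1 - t / (T + τ)) := by
  set θ := t / (T + τ)
  have hθ0 : 0 ≤ θ := div_nonneg ht0 (ht0.trans ht1)
  have hθ1 : θ ≤ 1 := div_le_one_of_le₀ ht1 (ht0.trans ht1)
  have hθt : (T + τ) * θ = t := by
    rcases (ht0.trans ht1).eq_or_lt with h | h
    · simp [θ, ← h, le_antisymm (h ▸ ht1) ht0]
    · exact mul_div_cancel₀ t h.ne'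
  have hexp : exp (-t * lam) = exp (-(T + τ) * lam) ^ θ := by
    rw [← exp_mul, ← hθt]
    ring_nf
  have hden : α + τ * exp (-(T + τ) * lam) ≤ α * (1 + τ * lam) + τ * exp (-T * lam) := by
    have : exp (-(T + τ) * lam) ≤ exp (-T * lam) := exp_le_exp.2 (by nlinarith)
    nlinarith [mul_nonneg (mul_nonneg hα.le hτ.le) hlam]
  calc τ * exp (-t * lam) / (α * (1 + τ * lam) + τ * exp (-T * lam))
      ≤ τ * exp (-(T + τ) * lam) ^ θ / (α + τ * exp (-(T + τ) * lam)) := by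
        rw [hexp]
        exact div_le_div_of_nonneg_left (by positivity) (by positivity) hden
    _ ≤ (τ / α) ^ (1 - θ) := mul_rpow_div_add_le hα hτ (exp_pos _) hθ0 hθ1

theorem stmt_3_general (T τ α lam t : ℝ) (hτ : 0 < τ) (hα : 0 < α)
    (hlam : 0 ≤ lam) (ht0 : 0 ≤ t) (ht1 : t ≤ T + τ) :
    τ ^ 2 * Real.exp (-2 * t * lam) / (α * (1 + τ * lam) + τ * Real.exp (-T * lam)) ^ 2 ≤
      (τ / α) ^ (2 * (1 - t / (T + τ))) := by
  have hsq : τ ^ 2 * exp (-2 * t * lam) / (α * (1 + τ * lam) + τ * exp (-T * lam)) ^ 2 =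
      (τ * exp (-t * lam) / (α * (1 + τ * lam) + τ * exp (-T * lam))) ^ 2 := by
    rw [div_pow, mul_pow, sq (exp _), ← exp_add]
    ring_nf
  rw [hsq, mul_comm (2 : ℝ), rpow_mul (by positivity), rpow_two]
  exact pow_le_pow_left₀ (by positivity) (mul_exp_div_add_le_rpow hτ hα hlam ht0 ht1) 2

theorem stmt_3 (T τ α lam t : ℝ) (hT : 0 < T) (hτ : 0 < τ) (hα : 0 < α)
    (hlam : 0 ≤ lam) (ht0 : 0 ≤ t) (ht1 : t ≤ T + τ) :
    τ ^ 2 * Real.exp (-2 * t * lam) / (α * (1 + τ * lam) + τ * Real.exp (-T * lam)) ^ 2 ≤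
      (τ / α) ^ (2 * (1 - t / (T + τ))) :=
  stmt_3_general T τ α lam t hτ hα hlam ht0 ht1
end

section
/- Let T > 0, τ ≥ 0, α > 0, λ ≥ 0 and 0 ≤ t ≤ T + τ. Then α²(1+τλ)² e^{2(T-t)λ} / (α(1+τλ) + e^{-Tλ})² ≤ α^{2t/(T+τ)} · e^{2Tλ}. -/
/-!
Put `s = t / (T + τ)` and `D = α(1 + τλ) + e^{-Tλ}`. Since `1 + τλ ≤ e^{τλ}`, we have
`D ≥ (1 + τλ)(α + e^{-(T+τ)λ})`, and weighted AM-GM bounds `α + e^{-(T+τ)λ}` below by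
`α^{1-s} e^{-tλ}`. Hence `α(1 + τλ)e^{(T-t)λ} / D ≤ α^s e^{Tλ}`; squaring gives the claim.
-/

open Real

lemma one_add_mul_exp_sub_le (x y : ℝ) : (1 + x) * exp (y - x) ≤ exp y :=
  calc (1 + x) * exp (y - x) ≤ exp x * exp (y - x) :=
        mul_le_mul_of_nonneg_right (by linarith [add_one_le_exp x]) (exp_pos _).le
    _ = exp y := by rw [← exp_add, add_sub_cancel]

lemma mode_coeff_le {T τ α lam t : ℝ} (hT : 0 < T) (hτ : 0 ≤ τ) (hα : 0 < α)
    (hlam : 0 ≤ lam) (ht0 : 0 ≤ t) (ht1 : t ≤ T + τ) :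
    α * (1 + τ * lam) * exp ((T - t) * lam) / (α * (1 + τ * lam) + exp (-T * lam)) ≤
      α ^ (t / (T + τ)) * exp (T * lam) := by
  have hTτ : 0 < T + τ := by linarith
  set s := t / (T + τ) with hs
  have hτlam : 0 ≤ 1 + τ * lam := by nlinarith
  have hexp_t : exp (-t * lam) = exp (-(T + τ) * lam) ^ s := by
    rw [← exp_mul, hs]
    field_simp
  have hα_split : α = α ^ s * α ^ (1 - s) := by
    rw [← rpow_add hα, add_sub_cancel, rpow_one]
  have hexp_split : exp ((T - t) * lam) = exp (T * lam) * exp (-t * lam) := by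
    rw [← exp_add]; ring_nf
  have hamgm : α ^ (1 - s) * exp (-t * lam) ≤ α + exp (-(T + τ) * lam) := by
    rw [hexp_t]
    exact rpow_one_sub_mul_rpow_le_add hα.le (exp_pos _).le (by positivity)
      ((div_le_one hTτ).mpr ht1)
  have hdecay : (1 + τ * lam) * exp (-(T + τ) * lam) ≤ exp (-T * lam) := by
    simpa [neg_mul, sub_eq_add_neg, add_mul, add_comm] using
      one_add_mul_exp_sub_le (τ * lam) (-T * lam)
  rw [div_le_iff₀ (by positivity)]
  calc α * (1 + τ * lam) * exp ((T - t) * lam)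
      = α ^ s * exp (T * lam) * ((1 + τ * lam) * (α ^ (1 - s) * exp (-t * lam))) := by
        rw [hexp_split]; nth_rewrite 1 [hα_split]; ring
    _ ≤ α ^ s * exp (T * lam) * (α * (1 + τ * lam) + exp (-T * lam)) := by
        gcongr
        nlinarith

theorem stmt_4 (T τ α lam t : ℝ) (hT : 0 < T) (hτ : 0 ≤ τ) (hα : 0 < α)
    (hlam : 0 ≤ lam) (ht0 : 0 ≤ t) (ht1 : t ≤ T + τ) :
    α ^ 2 * (1 + τ * lam) ^ 2 * Real.exp (2 * (T - t) * lam) /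
        (α * (1 + τ * lam) + Real.exp (-T * lam)) ^ 2 ≤
      α ^ (2 * t / (T + τ)) * Real.exp (2 * T * lam) := by
  have hcoeff := mode_coeff_le hT hτ hα hlam ht0 ht1
  have hlhs : α ^ 2 * (1 + τ * lam) ^ 2 * exp (2 * (T - t) * lam) /
      (α * (1 + τ * lam) + exp (-T * lam)) ^ 2 =
      (α * (1 + τ * lam) * exp ((T - t) * lam) / (α * (1 + τ * lam) + exp (-T * lam))) ^ 2 := by
    rw [div_pow, mul_pow, mul_pow, ← exp_nat_mul]; ring_nf
  have hrhs : α ^ (2 * t / (T + τ)) * exp (2 * T * lam) =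
      (α ^ (t / (T + τ)) * exp (T * lam)) ^ 2 := by
    rw [mul_pow, ← exp_nat_mul, ← rpow_natCast, ← rpow_mul hα.le]; ring_nf
  rw [hlhs, hrhs]
  exact pow_le_pow_left₀ (by positivity) hcoeff 2
end

section
/- Let T > 0, τ > 0, α > 0, λ ≥ 0 and 0 ≤ t ≤ T + τ. Then the squared difference (τ e^{-tλ}/(α(1+τλ) + τ e^{-Tλ}) − e^{(T−t)λ})² equals α²(1+τλ)² e^{2(T−t)λ}/(α(1+τλ) + τ e^{-Tλ})², and this is bounded above by (α/τ)^{2t/(T+τ)} · e^{2Tλ}. -/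
/-!
Write `A = α(1 + τλ)` and `B = τ e^{-Tλ}`. Since `e^{-tλ} = e^{(T-t)λ} e^{-Tλ}`, the error is
`-e^{(T-t)λ} A/(A + B)`, which gives the identity. For the bound, `x = A/(A + B)` satisfies both
`x ≤ 1` and `x ≤ A/B`, so `x² ≤ x^θ ≤ (A/B)^θ` for `θ = 2t/(T + τ) ∈ [0, 2]`; finally
`A/B ≤ (α/τ) e^{(T+τ)λ}` by `1 + τλ ≤ e^{τλ}`, and `e^{(T+τ)λθ} e^{2(T-t)λ} = e^{2Tλ}`.
-/

open Real

lemma sq_div_add_le_rpow {a b θ : ℝ} (ha : 0 < a) (hb : 0 < b) (hθ0 : 0 ≤ θ) (hθ2 : θ ≤ 2) :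
    (a / (a + b)) ^ 2 ≤ (a / b) ^ θ := by
  have hx : 0 < a / (a + b) := by positivity
  have hx1 : a / (a + b) ≤ 1 := (div_le_one (by positivity)).2 (by linarith)
  have hxab : a / (a + b) ≤ a / b := div_le_div_of_nonneg_left ha.le hb (by linarith)
  calc (a / (a + b)) ^ 2 = (a / (a + b)) ^ (2 : ℝ) := (rpow_natCast _ 2).symm
    _ ≤ (a / (a + b)) ^ θ := rpow_le_rpow_of_exponent_ge hx hx1 hθ2
    _ ≤ (a / b) ^ θ := rpow_le_rpow hx.le hxab hθ0

lemma one_add_mul_exp_rpow_le_exp {x y θ : ℝ} (hx : 0 ≤ 1 + x) (hθ : 0 ≤ θ) :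
    ((1 + x) * exp y) ^ θ ≤ exp ((x + y) * θ) := by
  rw [exp_mul, exp_add]
  gcongr
  linarith [add_one_le_exp x]

lemma regularized_sub_exact_sq_eq {A τ T t lam : ℝ} (hD : A + τ * exp (-T * lam) ≠ 0) :
    (τ * exp (-t * lam) / (A + τ * exp (-T * lam)) - exp ((T - t) * lam)) ^ 2 =
      A ^ 2 * exp (2 * (T - t) * lam) / (A + τ * exp (-T * lam)) ^ 2 := by
  have hsplit : exp (-t * lam) = exp ((T - t) * lam) * exp (-T * lam) := by
    rw [← exp_add]; ring_nf
  have hsq : exp (2 * (T - t) * lam) = exp ((T - t) * lam) ^ 2 := by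
    rw [← exp_nat_mul]; ring_nf
  rw [hsplit, hsq]
  set E := exp (-T * lam)
  field_simp
  ring

theorem stmt_5 (T τ α lam t : ℝ) (hT : 0 < T) (hτ : 0 < τ) (hα : 0 < α)
    (hlam : 0 ≤ lam) (ht0 : 0 ≤ t) (ht1 : t ≤ T + τ) :
    (τ * Real.exp (-t * lam) / (α * (1 + τ * lam) + τ * Real.exp (-T * lam)) -
          Real.exp ((T - t) * lam)) ^ 2 =
        α ^ 2 * (1 + τ * lam) ^ 2 * Real.exp (2 * (T - t) * lam) /
          (α * (1 + τ * lam) + τ * Real.exp (-T * lam)) ^ 2 ∧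
      α ^ 2 * (1 + τ * lam) ^ 2 * Real.exp (2 * (T - t) * lam) /
          (α * (1 + τ * lam) + τ * Real.exp (-T * lam)) ^ 2 ≤
        (α / τ) ^ (2 * t / (T + τ)) * Real.exp (2 * T * lam) := by
  set θ := 2 * t / (T + τ)
  have hθ0 : 0 ≤ θ := by positivity
  have hθ2 : θ ≤ 2 := (div_le_iff₀ (by linarith)).2 (by linarith)
  have hA : 0 < α * (1 + τ * lam) := by positivity
  have hB : 0 < τ * exp (-T * lam) := by positivity
  constructor
  · rw [← mul_pow]
    exact regularized_sub_exact_sq_eq (by positivity)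
  calc α ^ 2 * (1 + τ * lam) ^ 2 * exp (2 * (T - t) * lam) /
        (α * (1 + τ * lam) + τ * exp (-T * lam)) ^ 2
      = (α * (1 + τ * lam) / (α * (1 + τ * lam) + τ * exp (-T * lam))) ^ 2 *
          exp (2 * (T - t) * lam) := by rw [div_pow, mul_pow]; ring
    _ ≤ (α * (1 + τ * lam) / (τ * exp (-T * lam))) ^ θ * exp (2 * (T - t) * lam) := by
      gcongr
      exact sq_div_add_le_rpow hA hB hθ0 hθ2
    _ = (α / τ) ^ θ * ((1 + τ * lam) * exp (T * lam)) ^ θ * exp (2 * (T - t) * lam) := by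
      rw [← mul_rpow (by positivity) (by positivity), neg_mul, exp_neg]
      field_simp
    _ ≤ (α / τ) ^ θ * exp ((τ * lam + T * lam) * θ) * exp (2 * (T - t) * lam) := by
      gcongr
      exact one_add_mul_exp_rpow_le_exp (by positivity) hθ0
    _ = (α / τ) ^ θ * exp (2 * T * lam) := by
      rw [mul_assoc, ← exp_add]
      congr 2
      simp only [θ]
      field_simp
      ring
end
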